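/- In the Poincaré ball model of ℍⁿ with ξ = (1+r²)/(1-r²), the five weights P₁ = ξ, P₂ = 1, P₃ = (1+ξ)^{-k}, P₄ = ξ^{-k}, P₅ = ξ^{-k-1} (all with starting level h₀ = 1, V(ξ) = ξ² - 1, and tube volumes Q_i(t) = ω∫₁^t P_i(s)(s²-1)^{k/2-1}ds) satisfy the chain of comparisons: P_{i+1}/Q_{i+1} ≤ P_i/Q_i on (1,∞) for each i = 1,2,3,4. -/
import Mathlib


/-!
Statement 11: in the Poincaré ball model with `ξ = (1+r²)/(1-r²)`, starting level
`h₀ = 1` and `V(ξ) = ξ² - 1`, the five weights `P₁ = ξ`, `P₂ = 1`, `P₃ = (1+ξ)^{-k}`,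
`P₄ = ξ^{-k}`, `P₅ = ξ^{-k-1}` with tube volumes
`Qᵢ(t) = ω ∫₁^t Pᵢ(s)(s²-1)^{k/2-1} ds` satisfy the chain of comparisons
`P₅/Q₅ ≤ P₄/Q₄ ≤ P₃/Q₃ ≤ P₂/Q₂ ≤ P₁/Q₁` on `(1,∞)`.
-/

/-- Tube volume with weight `P` and starting level 1: `ω ∫₁^t P(s)(s²-1)^{k/2-1} ds`. -/
noncomputable def tubeQ (k : ℕ) (ω : ℝ) (P : ℝ → ℝ) (t : ℝ) : ℝ :=
  ω * ∫ s in (1 : ℝ)..t, P s * (s ^ 2 - 1) ^ ((k : ℝ) / 2 - 1)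

open intervalIntegral MeasureTheory in
/-- General comparison step: if `P'/P` is smaller at `t` than on `[1,t]`, then
`P'(t)/Q'(t) ≤ P(t)/Q(t)`. -/
lemma tubeQ_step (k : ℕ) (hk : 2 ≤ k) (ω : ℝ) (hω : 0 < ω) (t : ℝ) (ht : 1 < t)
    (P P' : ℝ → ℝ) (hPc : ContinuousOn P (Set.Icc 1 t)) (hP'c : ContinuousOn P' (Set.Icc 1 t))
    (hPpos : ∀ s ∈ Set.Icc 1 t, 0 < P s) (hP'pos : ∀ s ∈ Set.Icc 1 t, 0 < P' s)
    (hr : ∀ s ∈ Set.Icc 1 t, P' t * P s ≤ P' s * P t) :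
    P' t / tubeQ k ω P' t ≤ P t / tubeQ k ω P t := by
  have htmem : t ∈ Set.Icc (1:ℝ) t := ⟨ht.le, le_refl t⟩
  set g : ℝ → ℝ := fun s => (s ^ 2 - 1) ^ ((k : ℝ) / 2 - 1) with hg
  have hcexp : (0:ℝ) ≤ (k : ℝ) / 2 - 1 := by
    have : (2:ℝ) ≤ (k:ℝ) := by exact_mod_cast hk
    linarith
  have hgc : Continuous g :=
    (Real.continuous_rpow_const hcexp).comp (by continuity)
  have hgnonneg : ∀ s ∈ Set.Icc (1:ℝ) t, 0 ≤ g s := by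
    intro s hs
    have h1 : (1:ℝ) ≤ s := hs.1
    exact Real.rpow_nonneg (by nlinarith) _
  have hgpos : ∀ s ∈ Set.Ioo (1:ℝ) t, 0 < g s := by
    intro s hs
    have h1 : (1:ℝ) < s := hs.1
    exact Real.rpow_pos_of_pos (by nlinarith) _
  have huIcc : Set.uIcc (1:ℝ) t = Set.Icc 1 t := Set.uIcc_of_le ht.le
  have hint : IntervalIntegrable (fun s => P s * g s) volume 1 t := by
    apply ContinuousOn.intervalIntegrable
    rw [huIcc]; exact hPc.mul hgc.continuousOn
  have hint' : IntervalIntegrable (fun s => P' s * g s) volume 1 t := by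
    apply ContinuousOn.intervalIntegrable
    rw [huIcc]; exact hP'c.mul hgc.continuousOn
  set I : ℝ := ∫ s in (1:ℝ)..t, P s * g s with hI
  set I' : ℝ := ∫ s in (1:ℝ)..t, P' s * g s with hI'
  have hIpos : 0 < I :=
    intervalIntegral_pos_of_pos_on hint
      (fun s hs => mul_pos (hPpos s ⟨hs.1.le, hs.2.le⟩) (hgpos s hs)) ht
  have hI'pos : 0 < I' :=
    intervalIntegral_pos_of_pos_on hint'
      (fun s hs => mul_pos (hP'pos s ⟨hs.1.le, hs.2.le⟩) (hgpos s hs)) ht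
  have hPt := hPpos t htmem
  have hP't := hP'pos t htmem
  -- key integral comparison: P' t * I ≤ P t * I'
  have hkey : P' t * I ≤ P t * I' := by
    have hmono : ∫ s in (1:ℝ)..t, (P' t / P t) * (P s * g s)
        ≤ ∫ s in (1:ℝ)..t, P' s * g s := by
      apply intervalIntegral.integral_mono_on ht.le (hint.const_mul _) hint'
      intro s hs
      have h1 := hr s hs
      have h2 := hgnonneg s hs
      have h3 := (hPpos s hs).le
      rw [div_mul_eq_mul_div, div_le_iff₀ hPt]
      calc P' t * (P s * g s) = (P' t * P s) * g s := by ring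
        _ ≤ (P' s * P t) * g s := mul_le_mul_of_nonneg_right h1 h2
        _ = P' s * g s * P t := by ring
    rw [intervalIntegral.integral_const_mul] at hmono
    rw [div_mul_eq_mul_div, div_le_iff₀ hPt] at hmono
    linarith [hmono]
  have hQ : tubeQ k ω P t = ω * I := rfl
  have hQ' : tubeQ k ω P' t = ω * I' := rfl
  rw [hQ, hQ', div_le_div_iff₀ (by positivity) (by positivity)]
  calc P' t * (ω * I) = ω * (P' t * I) := by ring
    _ ≤ ω * (P t * I') := by nlinarith
    _ = P t * (ω * I') := by ring

theorem chain_of_weight_comparisons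
    (k : ℕ) (hk : 2 ≤ k) (ω : ℝ) (hω : 0 < ω) (t : ℝ) (ht : 1 < t) :
    -- weighted gS ≪ unweighted gS
    (t ^ (-(k : ℝ) - 1) / tubeQ k ω (fun s => s ^ (-(k : ℝ) - 1)) t
      ≤ t ^ (-(k : ℝ)) / tubeQ k ω (fun s => s ^ (-(k : ℝ))) t) ∧
    -- unweighted gS ≪ Euclidean
    (t ^ (-(k : ℝ)) / tubeQ k ω (fun s => s ^ (-(k : ℝ))) t
      ≤ (1 + t) ^ (-(k : ℝ)) / tubeQ k ω (fun s => (1 + s) ^ (-(k : ℝ))) t) ∧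
    -- Euclidean ≪ unweighted hyperbolic
    ((1 + t) ^ (-(k : ℝ)) / tubeQ k ω (fun s => (1 + s) ^ (-(k : ℝ))) t
      ≤ 1 / tubeQ k ω (fun _ => 1) t) ∧
    -- unweighted hyperbolic ≪ time-weighted hyperbolic
    (1 / tubeQ k ω (fun _ => 1) t ≤ t / tubeQ k ω (fun s => s) t) := by
  have hpos : ∀ s ∈ Set.Icc (1:ℝ) t, (0:ℝ) < s := fun s hs => lt_of_lt_of_le one_pos hs.1
  have hpos' : ∀ s ∈ Set.Icc (1:ℝ) t, (0:ℝ) < 1 + s := fun s hs => by linarith [hs.1]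
  have hne : ∀ s ∈ Set.Icc (1:ℝ) t, s ≠ 0 := fun s hs => (hpos s hs).ne'
  have hne' : ∀ s ∈ Set.Icc (1:ℝ) t, 1 + s ≠ 0 := fun s hs => (hpos' s hs).ne'
  have hct : ∀ a : ℝ, ContinuousOn (fun s : ℝ => s ^ a) (Set.Icc 1 t) := fun a =>
    ContinuousOn.rpow_const continuousOn_id (fun s hs => Or.inl (hne s hs))
  have hct' : ∀ a : ℝ, ContinuousOn (fun s : ℝ => (1 + s) ^ a) (Set.Icc 1 t) := fun a =>
    ContinuousOn.rpow_const (by fun_prop) (fun s hs => Or.inl (hne' s hs))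
  have htpos : (0:ℝ) < t := lt_trans one_pos ht
  refine ⟨?_, ?_, ?_, ?_⟩
  · -- P = s^(-k), P' = s^(-k-1)
    apply tubeQ_step k hk ω hω t ht _ _ (hct _) (hct _)
      (fun s hs => Real.rpow_pos_of_pos (hpos s hs) _)
      (fun s hs => Real.rpow_pos_of_pos (hpos s hs) _)
    intro s hs
    have hs1 : (1:ℝ) ≤ s := hs.1
    have hst : s ≤ t := hs.2
    have hspos : (0:ℝ) < s := hpos s hs
    have e1 : t ^ (-(k:ℝ) - 1) = t ^ (-(k:ℝ)) * t⁻¹ := by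
      rw [← Real.rpow_neg_one t, ← Real.rpow_add htpos]; ring_nf
    have e2 : s ^ (-(k:ℝ) - 1) = s ^ (-(k:ℝ)) * s⁻¹ := by
      rw [← Real.rpow_neg_one s, ← Real.rpow_add hspos]; ring_nf
    rw [e1, e2]
    have hinv : t⁻¹ ≤ s⁻¹ := by
      apply inv_anti₀ hspos hst
    have h1 : (0:ℝ) ≤ t ^ (-(k:ℝ)) := (Real.rpow_pos_of_pos htpos _).le
    have h2 : (0:ℝ) ≤ s ^ (-(k:ℝ)) := (Real.rpow_pos_of_pos hspos _).le
    calc t ^ (-(k:ℝ)) * t⁻¹ * s ^ (-(k:ℝ)) ≤ t ^ (-(k:ℝ)) * s⁻¹ * s ^ (-(k:ℝ)) := by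
          apply mul_le_mul_of_nonneg_right (mul_le_mul_of_nonneg_left hinv h1) h2
      _ = s ^ (-(k:ℝ)) * s⁻¹ * t ^ (-(k:ℝ)) := by ring
  · -- P = (1+s)^(-k), P' = s^(-k)
    apply tubeQ_step k hk ω hω t ht _ _ (hct' _) (hct _)
      (fun s hs => Real.rpow_pos_of_pos (hpos' s hs) _)
      (fun s hs => Real.rpow_pos_of_pos (hpos s hs) _)
    intro s hs
    have hs1 : (1:ℝ) ≤ s := hs.1
    have hst : s ≤ t := hs.2
    have hspos : (0:ℝ) < s := hpos s hs
    rw [← Real.mul_rpow htpos.le (by linarith : (0:ℝ) ≤ 1 + s),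
        ← Real.mul_rpow hspos.le (by linarith : (0:ℝ) ≤ 1 + t)]
    apply Real.rpow_le_rpow_of_nonpos (by nlinarith) (by nlinarith) (by
      simp only [neg_nonpos]
      exact_mod_cast Nat.zero_le k)
  · -- P = 1, P' = (1+s)^(-k)
    apply tubeQ_step k hk ω hω t ht _ _ continuousOn_const (hct' _)
      (fun s hs => one_pos)
      (fun s hs => Real.rpow_pos_of_pos (hpos' s hs) _)
    intro s hs
    simp only [mul_one]
    apply Real.rpow_le_rpow_of_nonpos (hpos' s hs) (by linarith [hs.2]) (by
      simp only [neg_nonpos]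
      exact_mod_cast Nat.zero_le k)
  · -- P = s, P' = 1
    apply tubeQ_step k hk ω hω t ht _ _ continuousOn_id continuousOn_const
      hpos (fun s hs => one_pos)
    intro s hs
    simpa using hs.2
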